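/- Let T be an R-tree with an isometric action of a finitely generated group G, and suppose the action is minimal. Then T contains a finite supporting subtree: there exists a finite subtree K ⊆ T (a finite union of arcs) such that every arc I ⊆ T is contained in a finite union of G-translates of K. Explicitly, for any point x ∈ T, the convex hull of {x} ∪ {s·x : s ∈ S ∪ S^{-1}} for a finite generating set S works. -/

import Mathlib

open Pointwise

/-- The segment `[x,y]` in a metric space (in an `ℝ`-tree this is the arc from `x` to `y`). -/
def seg {T : Type*} [MetricSpace T] (x y : T) : Set T :=
  {z : T | dist x z + dist z y = dist x y}

/-- An `ℝ`-tree: a geodesic metric space that is `0`-hyperbolic (four-point condition),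
equivalently any two points are joined by a unique arc, isometric to a real interval. -/
def IsRTree (T : Type*) [MetricSpace T] : Prop :=
  (∀ x y : T, ∃ f : ℝ → T, f 0 = x ∧ f (dist x y) = y ∧
      ∀ s ∈ Set.Icc (0 : ℝ) (dist x y), ∀ t ∈ Set.Icc (0 : ℝ) (dist x y),
        dist (f s) (f t) = |s - t|) ∧
  ∀ x y z w : T, dist x y + dist z w ≤ max (dist x z + dist y w) (dist x w + dist y z)

/-- A subtree: a convex subset. -/
def IsSubtree {T : Type*} [MetricSpace T] (Y : Set T) : Prop :=
  ∀ x ∈ Y, ∀ y ∈ Y, seg x y ⊆ Y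

/-- An arc: a subset isometric to a nondegenerate closed real interval. -/
def IsArc {T : Type*} [MetricSpace T] (A : Set T) : Prop :=
  ∃ (a b : ℝ) (f : ℝ → T), a < b ∧
    (∀ s ∈ Set.Icc a b, ∀ t ∈ Set.Icc a b, dist (f s) (f t) = |s - t|) ∧
    A = f '' Set.Icc a b

/-- A transverse family: a `G`-invariant collection of nondegenerate subtrees, any two
distinct members of which intersect in at most one point. -/
structure IsTransverseFamily (G : Type*) {T : Type*} [Group G] [MulAction G T]
    [MetricSpace T] (F : Set (Set T)) : Prop where
  invariant : ∀ (g : G), ∀ Y ∈ F, g • Y ∈ F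
  subtree : ∀ Y ∈ F, IsSubtree Y
  nondeg : ∀ Y ∈ F, ¬Y.Subsingleton
  transverse : ∀ Y ∈ F, ∀ Y' ∈ F, Y ≠ Y' → (Y ∩ Y').Subsingleton

/-- A minimal action: no proper nonempty invariant subtree. -/
def IsMinimalAction (G : Type*) (T : Type*) [Group G] [MulAction G T] [MetricSpace T] : Prop :=
  ∀ Y : Set T, Y.Nonempty → IsSubtree Y → (∀ g : G, g • Y = Y) → Y = Set.univ

/-- A finite subtree: a finite union of (possibly degenerate) arcs, i.e. of segments. -/
def IsFiniteSubtree {T : Type*} [MetricSpace T] (K : Set T) : Prop :=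
  ∃ (n : ℕ) (p q : Fin n → T), K = ⋃ i, seg (p i) (q i)

/-- A supporting subtree: every arc of `T` is covered by finitely many `G`-translates. -/
def IsSupporting (G : Type*) {T : Type*} [Group G] [MulAction G T] [MetricSpace T]
    (K : Set T) : Prop :=
  ∀ A : Set T, IsArc A → ∃ (r : ℕ) (g : Fin r → G), A ⊆ ⋃ i, g i • K


/-!
Let `K` be the hull of `x` and the points `s • x`. By induction over words in the generators,
each segment `[g₁ • x, g₂ • x]` is covered by finitely many translates of `K`, using the tripod
decomposition `[x, g₁g₂x] ⊆ [x, g₁x] ∪ g₁ • [x, g₂x]`. Points of `g₁ • K` and `g₂ • K` are joined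
through `g₁ • x` and `g₂ • x`, so the union of all translates of `K` is an invariant subtree, hence
all of `T` by minimality; every segment, and so every arc, then lies in finitely many translates.
-/

def IsZeroHyperbolic (T : Type*) [MetricSpace T] : Prop :=
  ∀ x y z w : T, dist x y + dist z w ≤ max (dist x z + dist y w) (dist x w + dist y z)

def subtreeHull {T : Type*} [MetricSpace T] (F : Set T) : Set T :=
  ⋂₀ {Y : Set T | IsSubtree Y ∧ F ⊆ Y}

def IsCoveredByTranslates (G : Type*) {T : Type*} [Group G] [MulAction G T] (K A : Set T) :
    Prop :=
  ∃ gs : Finset G, A ⊆ ⋃ g ∈ gs, g • K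

section Segment

variable {T : Type*} [MetricSpace T]

lemma right_mem_seg (x y : T) : y ∈ seg x y := by simp [seg]

lemma seg_comm (x y : T) : seg x y = seg y x := by
  ext z
  simp only [seg, Set.mem_ofPred_eq]
  rw [dist_comm x z, dist_comm z y, dist_comm x y, add_comm]

lemma seg_self (x : T) : seg x x = {x} := by
  ext z
  simp only [seg, Set.mem_ofPred_eq, dist_self, Set.mem_singleton_iff]
  constructor
  · intro h
    exact (dist_eq_zero.mp (by linarith [dist_nonneg (x := x) (y := z), dist_comm x z])).symm
  · rintro rfl
    simp

lemma seg_subset_seg_of_mem {x y z : T} (hz : z ∈ seg x y) : seg x z ⊆ seg x y := by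
  intro w hw
  simp only [seg, Set.mem_ofPred_eq] at *
  linarith [dist_triangle w z y, dist_triangle x w y]

/-- In an `ℝ`-tree the geodesic triangle `p, q, m` is a tripod. -/
lemma IsZeroHyperbolic.seg_subset_union (h : IsZeroHyperbolic T) (p q m : T) :
    seg p q ⊆ seg p m ∪ seg m q := by
  intro z hz
  simp only [seg, Set.mem_ofPred_eq, Set.mem_union] at hz ⊢
  have h4 := h p q z m
  rw [dist_comm z m, dist_comm q m, dist_comm q z] at h4
  rcases max_choice (dist p z + dist m q) (dist p m + dist z q) with hmax | hmax <;>
    rw [hmax] at h4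
  · exact Or.inr (by linarith [dist_triangle m z q])
  · exact Or.inl (by linarith [dist_triangle p z m, dist_comm z m])

lemma IsArc.exists_subset_seg {A : Set T} (hA : IsArc A) : ∃ p q : T, A ⊆ seg p q := by
  obtain ⟨a, b, f, hab, hf, rfl⟩ := hA
  refine ⟨f a, f b, ?_⟩
  rintro _ ⟨t, ht, rfl⟩
  have ha : a ∈ Set.Icc a b := Set.left_mem_Icc.2 hab.le
  have hb : b ∈ Set.Icc a b := Set.right_mem_Icc.2 hab.le
  simp only [seg, Set.mem_ofPred_eq, hf a ha t ht, hf t ht b hb, hf a ha b hb]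
  rw [abs_of_nonpos (by linarith [ht.1]), abs_of_nonpos (by linarith [ht.2]),
    abs_of_nonpos (by linarith)]
  ring

end Segment

section Hull

variable {T : Type*} [MetricSpace T]

lemma isSubtree_subtreeHull (F : Set T) : IsSubtree (subtreeHull F) :=
  fun _ hp _ hq _ hz =>
    Set.mem_sInter.2 fun Y hY => hY.1 _ (hp Y hY) _ (hq Y hY) hz

lemma subset_subtreeHull (F : Set T) : F ⊆ subtreeHull F :=
  fun _ ha => Set.mem_sInter.2 fun _ hY => hY.2 ha

lemma subtreeHull_subset {F Y : Set T} (hY : IsSubtree Y) (hF : F ⊆ Y) : subtreeHull F ⊆ Y :=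
  Set.sInter_subset_of_mem ⟨hY, hF⟩

lemma IsZeroHyperbolic.isSubtree_biUnion_seg (h : IsZeroHyperbolic T) (x : T) (F : Set T) :
    IsSubtree (⋃ a ∈ F, seg x a) := by
  intro p hp q hq z hz
  simp only [Set.mem_iUnion₂] at hp hq ⊢
  obtain ⟨a, ha, hpa⟩ := hp
  obtain ⟨b, hb, hqb⟩ := hq
  rcases h.seg_subset_union p q x hz with hz | hz
  · exact ⟨a, ha, seg_subset_seg_of_mem hpa (seg_comm p x ▸ hz)⟩
  · exact ⟨b, hb, seg_subset_seg_of_mem hqb hz⟩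

lemma IsZeroHyperbolic.subtreeHull_eq_biUnion_seg (h : IsZeroHyperbolic T) {F : Set T}
    {x : T} (hx : x ∈ F) : subtreeHull F = ⋃ a ∈ F, seg x a := by
  refine (subtreeHull_subset (h.isSubtree_biUnion_seg x F) ?_).antisymm
    (Set.iUnion₂_subset fun a ha => ?_)
  · exact fun a ha => Set.mem_biUnion ha (right_mem_seg x a)
  · exact isSubtree_subtreeHull F _ (subset_subtreeHull F hx) _ (subset_subtreeHull F ha)

lemma IsZeroHyperbolic.isFiniteSubtree_subtreeHull (h : IsZeroHyperbolic T) {F : Set T}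
    (hF : F.Finite) (hne : F.Nonempty) : IsFiniteSubtree (subtreeHull F) := by
  obtain ⟨x, hx⟩ := hne
  obtain ⟨n, e, rfl⟩ := hF.fin_embedding
  exact ⟨n, fun _ => x, e, by rw [h.subtreeHull_eq_biUnion_seg hx, Set.biUnion_range]⟩

end Hull

section Action

variable {G T : Type*} [MetricSpace T] [Group G] [MulAction G T]

lemma smul_seg [IsIsometricSMul G T] (g : G) (a b : T) :
    g • seg a b = seg (g • a) (g • b) := by
  ext z
  rw [Set.mem_smul_set_iff_inv_smul_mem]
  simp only [seg, Set.mem_ofPred_eq]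
  rw [← dist_smul g a, ← dist_smul g _ b, smul_inv_smul, dist_smul]

lemma IsSubtree.smul [IsIsometricSMul G T] {Y : Set T} (hY : IsSubtree Y) (g : G) :
    IsSubtree (g • Y) := by
  rintro _ ⟨p, hp, rfl⟩ _ ⟨q, hq, rfl⟩
  rw [← smul_seg]
  exact Set.smul_set_mono (hY p hp q hq)

omit [MetricSpace T] in
lemma iUnion_smul_invariant (K : Set T) (g : G) : g • ⋃ h : G, h • K = ⋃ h : G, h • K := by
  rw [Set.smul_set_iUnion]
  simp_rw [smul_smul]
  exact (Equiv.mulLeft g).surjective.iUnion_comp fun h => h • K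

end Action

namespace IsCoveredByTranslates

variable {G T : Type*} [Group G] [MulAction G T] {K A B : Set T}

lemma mono (hB : IsCoveredByTranslates G K B) (hAB : A ⊆ B) : IsCoveredByTranslates G K A :=
  let ⟨gs, hgs⟩ := hB
  ⟨gs, hAB.trans hgs⟩

lemma union [DecidableEq G] (hA : IsCoveredByTranslates G K A)
    (hB : IsCoveredByTranslates G K B) : IsCoveredByTranslates G K (A ∪ B) := by
  obtain ⟨gs, hgs⟩ := hA
  obtain ⟨gs', hgs'⟩ := hB
  refine ⟨gs ∪ gs', Set.union_subset (hgs.trans ?_) (hgs'.trans ?_)⟩ <;>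
    exact Set.biUnion_mono (by simp) fun _ _ => subset_rfl

lemma of_subset_smul {g : G} (hA : A ⊆ g • K) : IsCoveredByTranslates G K A :=
  ⟨{g}, by simpa using hA⟩

lemma smul (hA : IsCoveredByTranslates G K A) (g : G) : IsCoveredByTranslates G K (g • A) := by
  classical
  obtain ⟨gs, hgs⟩ := hA
  refine ⟨gs.image (g * ·), ?_⟩
  rw [Finset.set_biUnion_finset_image]
  simpa only [Set.smul_set_iUnion₂, smul_smul] using Set.smul_set_mono (a := g) hgs

lemma subset_iUnion_smul (hA : IsCoveredByTranslates G K A) : A ⊆ ⋃ g : G, g • K :=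
  let ⟨_, hgs⟩ := hA
  hgs.trans (Set.iUnion₂_subset fun g _ => Set.subset_iUnion (· • K) g)

lemma isSupporting [MetricSpace T] (h : ∀ p q : T, IsCoveredByTranslates G K (seg p q)) :
    IsSupporting G K := by
  intro A hA
  obtain ⟨p, q, hApq⟩ := hA.exists_subset_seg
  obtain ⟨gs, hgs⟩ := (h p q).mono hApq
  refine ⟨gs.card, fun i => gs.equivFin.symm i, hgs.trans (Set.iUnion₂_subset fun g hg => ?_)⟩
  exact Set.subset_iUnion_of_subset (gs.equivFin ⟨g, hg⟩) (by simp)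

end IsCoveredByTranslates

section Covering

variable {G T : Type*} [MetricSpace T] [Group G] [MulAction G T] [IsIsometricSMul G T]
  {K : Set T} {x : T}

lemma IsZeroHyperbolic.isCoveredByTranslates_seg_smul (h : IsZeroHyperbolic T) (hx : x ∈ K)
    {S : Set G} (hS : ∀ s ∈ S, seg x (s • x) ⊆ K) {g : G} (hg : g ∈ Subgroup.closure S) :
    IsCoveredByTranslates G K (seg x (g • x)) := by
  classical
  induction hg using Subgroup.closure_induction with
  | mem s hs => exact .of_subset_smul (g := 1) (by rw [one_smul]; exact hS s hs)
  | one =>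
    refine .of_subset_smul (g := 1) ?_
    rw [one_smul, one_smul, seg_self]
    exact Set.singleton_subset_iff.2 hx
  | mul g₁ g₂ _ _ h₁ h₂ =>
    refine (h₁.union (h₂.smul g₁)).mono ?_
    rw [smul_seg, ← mul_smul]
    exact h.seg_subset_union _ _ _
  | inv g _ hg =>
    rw [show seg x (g⁻¹ • x) = g⁻¹ • seg x (g • x) by rw [smul_seg, inv_smul_smul, seg_comm]]
    exact hg.smul g⁻¹

lemma IsZeroHyperbolic.isCoveredByTranslates_seg_of_mem_smul (h : IsZeroHyperbolic T)
    (hK : IsSubtree K) (hx : x ∈ K)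
    (horbit : ∀ g₁ g₂ : G, IsCoveredByTranslates G K (seg (g₁ • x) (g₂ • x)))
    {p q : T} {g₁ g₂ : G} (hp : p ∈ g₁ • K) (hq : q ∈ g₂ • K) :
    IsCoveredByTranslates G K (seg p q) := by
  classical
  have hp' : seg p (g₁ • x) ⊆ g₁ • K := hK.smul g₁ p hp _ (Set.smul_mem_smul_set hx)
  have hq' : seg (g₂ • x) q ⊆ g₂ • K := hK.smul g₂ _ (Set.smul_mem_smul_set hx) q hq
  refine ((IsCoveredByTranslates.of_subset_smul hp').union ?_).mono (h.seg_subset_union _ _ _)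
  exact ((horbit g₁ g₂).union (.of_subset_smul hq')).mono (h.seg_subset_union _ _ _)

lemma IsZeroHyperbolic.iUnion_smul_eq_univ (h : IsZeroHyperbolic T)
    (hmin : IsMinimalAction G T) (hK : IsSubtree K) (hx : x ∈ K)
    (horbit : ∀ g₁ g₂ : G, IsCoveredByTranslates G K (seg (g₁ • x) (g₂ • x))) :
    ⋃ g : G, g • K = Set.univ := by
  refine hmin _ ⟨x, Set.mem_iUnion.2 ⟨1, by rwa [one_smul]⟩⟩ ?_ (iUnion_smul_invariant K)
  intro p hp q hq
  obtain ⟨g₁, hp⟩ := Set.mem_iUnion.1 hp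
  obtain ⟨g₂, hq⟩ := Set.mem_iUnion.1 hq
  exact (h.isCoveredByTranslates_seg_of_mem_smul hK hx horbit hp hq).subset_iUnion_smul

theorem IsZeroHyperbolic.isSupporting_of_isMinimalAction (h : IsZeroHyperbolic T) (hmin : IsMinimalAction G T)
    (hK : IsSubtree K) (hx : x ∈ K) {S : Set G} (hgen : Subgroup.closure S = ⊤)
    (hS : ∀ s ∈ S, seg x (s • x) ⊆ K) : IsSupporting G K := by
  have horbit (g₁ g₂ : G) : IsCoveredByTranslates G K (seg (g₁ • x) (g₂ • x)) := by
    have hg : g₁⁻¹ * g₂ ∈ Subgroup.closure S := hgen ▸ Subgroup.mem_top _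
    have := (h.isCoveredByTranslates_seg_smul hx hS hg).smul g₁
    rwa [smul_seg, smul_smul, mul_inv_cancel_left] at this
  have hcover := h.iUnion_smul_eq_univ hmin hK hx horbit
  refine IsCoveredByTranslates.isSupporting fun p q => ?_
  obtain ⟨g₁, hp⟩ := Set.mem_iUnion.1 (hcover ▸ Set.mem_univ p)
  obtain ⟨g₂, hq⟩ := Set.mem_iUnion.1 (hcover ▸ Set.mem_univ q)
  exact h.isCoveredByTranslates_seg_of_mem_smul hK hx horbit hp hq

end Covering

/-- In a minimal `ℝ`-tree with an isometric action of a finitely generated group, the convex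
hull of a point together with its images under a symmetric generating set is a finite
supporting subtree; in particular a finite supporting subtree exists. -/
theorem exists_finite_supporting_subtree
    {T G : Type*} [MetricSpace T] [Group G] [MulAction G T]
    (hT : IsRTree T) (hiso : ∀ g : G, Isometry fun x : T => g • x)
    (hmin : IsMinimalAction G T)
    (S : Finset G) (hgen : Subgroup.closure (S : Set G) = ⊤) (x : T) :
    IsSubtree (⋂₀ {Y : Set T | IsSubtree Y ∧
        insert x ((fun s : G => s • x) '' ((S : Set G) ∪ (S : Set G)⁻¹)) ⊆ Y}) ∧
      IsFiniteSubtree (⋂₀ {Y : Set T | IsSubtree Y ∧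
        insert x ((fun s : G => s • x) '' ((S : Set G) ∪ (S : Set G)⁻¹)) ⊆ Y}) ∧
      IsSupporting G (⋂₀ {Y : Set T | IsSubtree Y ∧
        insert x ((fun s : G => s • x) '' ((S : Set G) ∪ (S : Set G)⁻¹)) ⊆ Y}) := by
  have : IsIsometricSMul G T := ⟨hiso⟩
  have h0 : IsZeroHyperbolic T := hT.2
  set F := insert x ((fun s : G => s • x) '' ((S : Set G) ∪ (S : Set G)⁻¹))
  have hF : F.Finite := ((S.finite_toSet.union S.finite_toSet.inv).image _).insert x
  have hxF : x ∈ F := Set.mem_insert x _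
  have hxK : x ∈ subtreeHull F := subset_subtreeHull F hxF
  have hSK (s : G) (hs : s ∈ (S : Set G)) : seg x (s • x) ⊆ subtreeHull F :=
    isSubtree_subtreeHull F _ hxK _
      (subset_subtreeHull F (Set.mem_insert_of_mem _ ⟨s, Or.inl hs, rfl⟩))
  exact ⟨isSubtree_subtreeHull F, h0.isFiniteSubtree_subtreeHull hF ⟨x, hxF⟩,
    h0.isSupporting_of_isMinimalAction hmin (isSubtree_subtreeHull F) hxK hgen hSK⟩
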